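/- arXiv:1210.7396 — 8 statements merged into one kernel-verified Lean document; each statement's English description precedes it below -/
import Mathlib

section
/- Define a sequence a : ℕ → ℤ (depending on an integer parameter A) by a(0)=1, a(1)=-1, a(2)=A, and for n ≥ 3, a(n) = -(1/2)·∑_{k=0}^{n-1} a(k)·C(n,k)·2^{n-k}. Then a(4)=0, and more generally a(2k)=0 for every k ≥ 2. -/
/-!
With `F` the exponential generating function of `a` and `Q = 2 + A X²`, the recursion (together
with the three initial values) says exactly `F · e^{2X} = Q - F`, i.e. `F = Q / (1 + e^{2X})`.
Since `1 / (1 + e^{cX}) - 1/2` is odd and `Q` is even, `F(X) + F(-X) = Q`; comparing the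
coefficients of `X^{2k}` for `k ≥ 2` gives `2 a(2k) / (2k)! = 0`.
-/

open PowerSeries Finset Nat

section OddPart

variable {A : Type*} [CommRing A] [Algebra ℚ A]

theorem isUnit_one_add_rescale_exp (c : A) : IsUnit (1 + rescale c (exp A)) := by
  refine isUnit_iff_constantCoeff.mpr ?_
  have h2 : IsUnit (2 : A) := by
    simpa [map_ofNat] using (isUnit_iff_ne_zero.mpr two_ne_zero).map (algebraMap ℚ A)
  rw [← coeff_zero_eq_constantCoeff_apply, map_add, coeff_rescale]
  simpa [one_add_one_eq_two] using h2

theorem add_rescale_neg_one_eq_of_mul_rescale_exp_eq {c : A} {F Q : A⟦X⟧}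
    (hQ : rescale (-1) Q = Q) (hF : F * rescale c (exp A) = Q - F) :
    F + rescale (-1) F = Q := by
  set e := rescale c (exp A)
  have hF' : rescale (-1) F * rescale (-c) (exp A) = Q - rescale (-1) F := by
    simpa [e, hQ, rescale_rescale] using congrArg (rescale (-1)) hF
  have he : e * rescale (-c) (exp A) = 1 := by
    simp [e, exp_mul_exp_eq_exp_add]
  refine (isUnit_one_add_rescale_exp c).mul_left_cancel ?_
  linear_combination hF + e * hF' - rescale (-1) F * he

end OddPart

noncomputable def egf (u : ℕ → ℚ) : ℚ⟦X⟧ := mk fun n => u n / n !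

theorem coeff_egf (u : ℕ → ℚ) (n : ℕ) : coeff n (egf u) = u n / n ! := coeff_mk _ _

theorem coeff_egf_mul_rescale_exp (u : ℕ → ℚ) (c : ℚ) (n : ℕ) :
    coeff n (egf u * rescale c (exp ℚ)) =
      (∑ k ∈ range (n + 1), u k * n.choose k * c ^ (n - k)) / n ! := by
  rw [coeff_mul, Nat.sum_antidiagonal_eq_sum_range_succ
    (fun i j => coeff i (egf u) * coeff j (rescale c (exp ℚ))), sum_div]
  refine sum_congr rfl fun k hk => ?_
  have hkn : k ≤ n := Nat.lt_succ_iff.mp (mem_range.mp hk)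
  rw [coeff_rescale, coeff_exp, coeff_egf, Nat.choose_eq_factorial_div_factorial hkn,
    Nat.cast_div (Nat.factorial_mul_factorial_dvd_factorial hkn) (by positivity)]
  simp only [Algebra.algebraMap_self, RingHom.id_apply, cast_mul]
  field_simp

section EvenQuadratic

variable {R : Type*} [CommRing R] (b d : R)

theorem coeff_C_add_C_mul_X_sq (n : ℕ) :
    coeff n (C b + C d * X ^ 2) = if n = 0 then b else if n = 2 then d else 0 := by
  simp only [map_add, coeff_C, coeff_C_mul_X_pow]
  split_ifs <;> first | omega | simp

theorem rescale_neg_one_C_add_C_mul_X_sq :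
    rescale (-1) (C b + C d * X ^ 2) = C b + C d * X ^ 2 := by
  ext n
  rw [coeff_rescale, coeff_C_add_C_mul_X_sq]
  split_ifs <;> simp_all

end EvenQuadratic

theorem egf_mul_rescale_two_exp_eq {A : ℤ} {a : ℕ → ℤ}
    (h0 : a 0 = 1) (h1 : a 1 = -1) (h2 : a 2 = A)
    (hrec : ∀ n, 3 ≤ n →
      2 * a n = -∑ k ∈ range n, a k * (n.choose k : ℤ) * 2 ^ (n - k)) :
    egf (fun n => a n) * rescale 2 (exp ℚ) = C 2 + C (A : ℚ) * X ^ 2 - egf (fun n => a n) := by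
  ext n
  rw [coeff_egf_mul_rescale_exp, map_sub, coeff_egf, coeff_C_add_C_mul_X_sq,
    div_eq_iff (by positivity), sub_mul, div_mul_cancel₀ _ (by positivity)]
  match n with
  | 0 => norm_num [h0]
  | 1 => norm_num [sum_range_succ, h0, h1]
  | 2 => norm_num [sum_range_succ, h0, h1, h2]; ring
  | n + 3 =>
    have hZ : ∑ k ∈ range (n + 3), a k * ((n + 3).choose k : ℤ) * 2 ^ (n + 3 - k) + a (n + 3)
        = -a (n + 3) := by linarith [hrec (n + 3) (by omega)]
    rw [sum_range_succ, if_neg (by omega), if_neg (by omega)]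
    norm_num
    exact_mod_cast hZ

theorem stmt_0 (A : ℤ) (a : ℕ → ℤ)
    (h0 : a 0 = 1) (h1 : a 1 = -1) (h2 : a 2 = A)
    (hrec : ∀ n, 3 ≤ n →
      2 * a n = -∑ k ∈ Finset.range n, a k * (n.choose k : ℤ) * 2 ^ (n - k)) :
    a 4 = 0 ∧ ∀ k, 2 ≤ k → a (2 * k) = 0 := by
  have hsym := add_rescale_neg_one_eq_of_mul_rescale_exp_eq
    (rescale_neg_one_C_add_C_mul_X_sq 2 (A : ℚ)) (egf_mul_rescale_two_exp_eq h0 h1 h2 hrec)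
  have heven : ∀ k, 2 ≤ k → a (2 * k) = 0 := by
    intro k hk
    have h := congrArg (coeff (2 * k)) hsym
    rw [map_add, coeff_rescale, coeff_egf, coeff_C_add_C_mul_X_sq, if_neg (by omega),
      if_neg (by omega), pow_mul] at h
    norm_num at h
    exact_mod_cast h.resolve_right (factorial_ne_zero _)
  exact ⟨heven 2 le_rfl, heven⟩
end

section
/- Let a : ℕ → ℚ satisfy a(0)=1, a(1)=-1, a(2)=A with A ≤ 0, and a(n) = -(1/2)·∑_{k=0}^{n-1} a(k)·C(n,k)·2^{n-k} for n ≥ 3. Define c(j,d) = ∑_{k=j}^{d} 2^{-k}·C(d-j, d-k)·a(k). Then for all d ≥ 2 and all 0 ≤ j ≤ d, c(j,d) = (-1)^d · c(d-j, d). -/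
/-!
With `b k = a k / 2 ^ k` one has `c j d = binomSum b j (d - j)`, where
`binomSum b j m = ∑ t ≤ m, C(m, t) b (j + t)`. The defect
`F j m = binomSum b j m - (-1) ^ (j + m) binomSum b m j` obeys Pascal's rule
`F j (m + 1) = F j m + F (j + 1) m` and the twisted antisymmetry `F m j = -(-1) ^ (j + m) F j m`.
Induct on `n = j + m`: if `F` vanishes on the antidiagonal `n`, Pascal's rule makes it constant,
equal to `F 0 (n + 1)`, on the antidiagonal `n + 1`. For `n + 1` even the antisymmetry forces
this constant to be `0`; for `n + 1` odd, `F 0 (n + 1) = 0` comes from the recurrence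
(`binomSum b 0 n = -b n` for `n ≥ 3`) and from `a 0 = 1`, `a 1 = -1` for `n + 1 = 1`.
-/

open Finset

section BinomSum

variable {R : Type*} [Semiring R] (b : ℕ → R)

def binomSum (j m : ℕ) : R :=
  ∑ t ∈ range (m + 1), (m.choose t : R) * b (j + t)

@[simp]
theorem binomSum_zero_right (j : ℕ) : binomSum b j 0 = b j := by
  simp [binomSum]

theorem binomSum_succ_right (j m : ℕ) :
    binomSum b j (m + 1) = binomSum b j m + binomSum b (j + 1) m := by
  have hS : binomSum b j m =
      ∑ t ∈ range (m + 1), (m.choose (t + 1) : R) * b (j + (t + 1)) + b j := by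
    rw [binomSum, sum_range_succ', sum_range_succ _ m]
    simp
  rw [binomSum, sum_range_succ', hS, binomSum]
  simp only [Nat.choose_succ_succ', Nat.cast_add, add_mul, sum_add_distrib, Nat.choose_zero_right,
    Nat.cast_one, one_mul, add_zero, add_right_comm j 1, add_assoc]
  abel

theorem sum_Icc_choose_mul_eq_binomSum {j d : ℕ} (hjd : j ≤ d) :
    ∑ k ∈ Icc j d, ((d - j).choose (d - k) : R) * b k = binomSum b j (d - j) := by
  rw [← Ico_add_one_right_eq_Icc, sum_Ico_eq_sum_range, binomSum,
    show d + 1 - j = d - j + 1 by omega]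
  refine sum_congr rfl fun t ht => ?_
  rw [show d - (j + t) = d - j - t by omega, Nat.choose_symm (by simp at ht; omega)]

end BinomSum

section SkewDefect

variable {R : Type*} [CommRing R] (b : ℕ → R)

def skewDefect (j m : ℕ) : R :=
  binomSum b j m - (-1) ^ (j + m) * binomSum b m j

theorem skewDefect_swap (j m : ℕ) :
    skewDefect b m j = -((-1) ^ (j + m) * skewDefect b j m) := by
  have hsq : ((-1 : R) ^ (j + m)) ^ 2 = 1 := by
    rw [← pow_mul, mul_comm, pow_mul, neg_one_sq, one_pow]
  rw [skewDefect, skewDefect, add_comm m j]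
  linear_combination -binomSum b m j * hsq

theorem skewDefect_succ_right (j m : ℕ) :
    skewDefect b j (m + 1) = skewDefect b j m + skewDefect b (j + 1) m := by
  have hS := binomSum_succ_right b m j
  simp only [skewDefect, binomSum_succ_right b j m, add_right_comm j 1 m, ← add_assoc j m 1,
    pow_succ]
  linear_combination -(-1) ^ (j + m) * hS

theorem skewDefect_eq_of_antidiagonal {n : ℕ} (h : ∀ j m, j + m = n → skewDefect b j m = 0) :
    ∀ j m, j + m = n + 1 → skewDefect b j m = skewDefect b 0 (n + 1) := by
  intro j
  induction j with
  | zero => intro m hm; rw [← hm, zero_add]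
  | succ j ih =>
    intro m hm
    rw [← ih (m + 1) (by omega), skewDefect_succ_right, h j m (by omega), zero_add]

theorem skewDefect_eq_zero [IsAddTorsionFree R] (hodd : ∀ n, Odd n → skewDefect b 0 n = 0)
    (j m : ℕ) : skewDefect b j m = 0 := by
  suffices ∀ n j m, j + m = n → skewDefect b j m = 0 from this _ j m rfl
  intro n
  induction n with
  | zero =>
    intro j m h
    obtain ⟨rfl, rfl⟩ : j = 0 ∧ m = 0 := by omega
    simp [skewDefect]
  | succ n ih =>
    have hconst := skewDefect_eq_of_antidiagonal b ih
    have h0 : skewDefect b 0 (n + 1) = 0 := by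
      rcases Nat.even_or_odd (n + 1) with heven | hn_odd
      · have hswap := skewDefect_swap b 0 (n + 1)
        rw [hconst (n + 1) 0 rfl, zero_add, heven.neg_one_pow, one_mul] at hswap
        exact self_eq_neg.mp hswap
      · exact hodd _ hn_odd
    intro j m hjm
    rw [hconst j m hjm, h0]

end SkewDefect

theorem binomSum_div_two_pow_eq_neg {K : Type*} [Field K] [NeZero (2 : K)] {a : ℕ → K} {n : ℕ}
    (hn : 2 * a n = -∑ k ∈ range n, a k * (n.choose k : K) * 2 ^ (n - k)) :
    binomSum (fun k => a k / 2 ^ k) 0 n = -(a n / 2 ^ n) := by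
  have hscale : 2 ^ n * binomSum (fun k => a k / 2 ^ k) 0 n =
      ∑ k ∈ range (n + 1), a k * (n.choose k : K) * 2 ^ (n - k) := by
    rw [binomSum, mul_sum]
    refine sum_congr rfl fun k hk => ?_
    rw [zero_add, ← Nat.sub_add_cancel (Nat.lt_succ_iff.mp (mem_range.mp hk)), pow_add,
      Nat.add_sub_cancel]
    field_simp
  rw [sum_range_succ, Nat.sub_self, Nat.choose_self, Nat.cast_one, mul_one, pow_zero, mul_one,
    neg_eq_iff_eq_neg.mp hn.symm] at hscale
  field_simp
  linear_combination hscale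

theorem stmt_2_general (a : ℕ → ℚ)
    (h0 : a 0 = 1) (h1 : a 1 = -1)
    (hrec : ∀ n, 3 ≤ n →
      2 * a n = -∑ k ∈ Finset.range n, a k * (n.choose k : ℚ) * 2 ^ (n - k))
    (c : ℕ → ℕ → ℚ)
    (hc : ∀ j d, c j d = ∑ k ∈ Finset.Icc j d,
      ((d - j).choose (d - k) : ℚ) * a k / 2 ^ k) :
    ∀ d, 2 ≤ d → ∀ j, j ≤ d → c j d = (-1) ^ d * c (d - j) d := by
  intro d _ j hj
  set b : ℕ → ℚ := fun k => a k / 2 ^ k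
  have hc_binomSum : ∀ i ≤ d, c i d = binomSum b i (d - i) := fun i hi => by
    simp_rw [hc, mul_div_assoc]
    exact sum_Icc_choose_mul_eq_binomSum b hi
  have hodd : ∀ n, Odd n → skewDefect b 0 n = 0 := by
    intro n hn
    obtain rfl | hn3 : n = 1 ∨ 3 ≤ n := by rcases hn with ⟨k, rfl⟩; omega
    · simp [skewDefect, binomSum, sum_range_succ, b, h0, h1]
      norm_num
    · simp only [skewDefect, binomSum_div_two_pow_eq_neg (hrec n hn3), zero_add,
        binomSum_zero_right, hn.neg_one_pow, b]
      ring
  have hskew := skewDefect_eq_zero b hodd j (d - j)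
  rw [skewDefect, sub_eq_zero, Nat.add_sub_cancel' hj] at hskew
  rw [hc_binomSum j hj, hc_binomSum (d - j) (Nat.sub_le d j), Nat.sub_sub_self hj, hskew]

theorem stmt_2 (A : ℚ) (hA : A ≤ 0) (a : ℕ → ℚ)
    (h0 : a 0 = 1) (h1 : a 1 = -1) (h2 : a 2 = A)
    (hrec : ∀ n, 3 ≤ n →
      2 * a n = -∑ k ∈ Finset.range n, a k * (n.choose k : ℚ) * 2 ^ (n - k))
    (c : ℕ → ℕ → ℚ)
    (hc : ∀ j d, c j d = ∑ k ∈ Finset.Icc j d,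
      ((d - j).choose (d - k) : ℚ) * a k / 2 ^ k) :
    ∀ d, 2 ≤ d → ∀ j, j ≤ d → c j d = (-1) ^ d * c (d - j) d :=
  stmt_2_general a h0 h1 hrec c hc
end

section
/- Let a : ℕ → ℚ satisfy a(0)=1, a(1)=-1, a(2)=A with A ≤ 0, and a(n) = -(1/2)·∑_{k=0}^{n-1} a(k)·C(n,k)·2^{n-k} for n ≥ 3. Define c(j,d) = ∑_{k=j}^{d} 2^{-k}·C(d-j,d-k)·a(k). Then for every m ≥ 1: c(j,4m) ≥ 0 for all 0 ≤ j ≤ 4m, and c(j,4m+2) ≤ 0 for all 0 ≤ j ≤ 4m+2. -/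
/-!
Write `c(·, d)` for the `d`-th column `j ↦ c(j, d)`. Pascal's rule gives
`c(j, d+1) = c(j+1, d+1) + c(j, d)`, which telescopes to
`c(j, d+1) = c(d+1, d+1) + ∑_{j ≤ i ≤ d} c(i, d)`, while the recurrence for `a` says exactly that
`c(0, d) = -c(d, d)` for `d ≥ 3`. Hence, for `d ≥ 2`,
`2 c(j, d+1) = ∑_{i ≥ j} c(i, d) - ∑_{i < j} c(i, d)`.
By reflecting sums, this transform turns a symmetric nonnegative column into an antisymmetric
column that is nonnegative on its lower half, and turns such a column (whose total is `0`) into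
a symmetric nonpositive one. Starting from `-c(·, 2) = (-A/4, 1/2 - A/4, -A/4) ≥ 0`, induction
shows that `(-1)^r c(·, 2r)` is symmetric and nonnegative for all `r ≥ 1`.
-/

open Finset

def shortHCoeff (a : ℕ → ℚ) (j d : ℕ) : ℚ :=
  ∑ k ∈ Icc j d, ((d - j).choose (d - k) : ℚ) * a k / 2 ^ k

def IsHalfDiff (u v : ℕ → ℚ) (d : ℕ) : Prop :=
  ∀ j ≤ d + 1, 2 * v j = ∑ i ∈ Ico j (d + 1), u i - ∑ i ∈ range j, u i

def SymmNonneg (d : ℕ) (w : ℕ → ℚ) : Prop :=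
  (∀ j ≤ d, w (d - j) = w j) ∧ ∀ j ≤ d, 0 ≤ w j

def AntisymmLowerNonneg (d : ℕ) (w : ℕ → ℚ) : Prop :=
  (∀ j ≤ d, w (d - j) = -w j) ∧ ∀ j, 2 * j ≤ d → 0 ≤ w j

theorem sum_Ico_top_eq_mul_sum_range {u : ℕ → ℚ} {d j : ℕ} {s : ℚ}
    (hu : ∀ i ≤ d, u (d - i) = s * u i) (hj : j ≤ d + 1) :
    ∑ i ∈ Ico (d + 1 - j) (d + 1), u i = s * ∑ i ∈ range j, u i := by
  have hreflect := sum_Ico_reflect u 0 hj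
  rw [Nat.sub_zero] at hreflect
  rw [mul_sum, ← Nat.Ico_zero_eq_range, ← hreflect]
  exact sum_congr rfl fun i hi => hu i (by have := (mem_Ico.mp hi).2; omega)

namespace IsHalfDiff

variable {u v : ℕ → ℚ} {d : ℕ}

theorem const_mul (h : IsHalfDiff u v d) (s : ℚ) :
    IsHalfDiff (fun i => s * u i) (fun i => s * v i) d := by
  intro j hj
  simp only [← mul_sum]
  linear_combination s * h j hj

theorem antisymmLowerNonneg (h : IsHalfDiff u v d) (hu : SymmNonneg d u) :
    AntisymmLowerNonneg (d + 1) v := by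
  have hrefl : ∀ j ≤ d + 1, ∑ i ∈ Ico (d + 1 - j) (d + 1), u i = ∑ i ∈ range j, u i := by
    intro j hj
    simpa using sum_Ico_top_eq_mul_sum_range (s := 1) (by simpa using hu.1) hj
  constructor
  · intro j hj
    have hcompl := hrefl (d + 1 - j) (by omega)
    rw [Nat.sub_sub_self hj] at hcompl
    have hreflected := h (d + 1 - j) (by omega)
    rw [hrefl j hj, ← hcompl] at hreflected
    linarith [h j hj]
  · intro j hj
    have hsplit := sum_Ico_consecutive u (show j ≤ d + 1 - j by omega)
      (show d + 1 - j ≤ d + 1 by omega)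
    have hmiddle : 0 ≤ ∑ i ∈ Ico j (d + 1 - j), u i :=
      sum_nonneg fun i hi => hu.2 i (by have := mem_Ico.mp hi; omega)
    linarith [h j (by omega), hrefl j (by omega)]

theorem symmNonneg_neg (h : IsHalfDiff u v d) (hu : AntisymmLowerNonneg d u) :
    SymmNonneg (d + 1) (fun j => -v j) := by
  have hrefl : ∀ j ≤ d + 1, ∑ i ∈ Ico (d + 1 - j) (d + 1), u i = -∑ i ∈ range j, u i := by
    intro j hj
    simpa using sum_Ico_top_eq_mul_sum_range (s := -1) (by simpa using hu.1) hj
  have htotal : ∑ i ∈ range (d + 1), u i = 0 := by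
    have := hrefl (d + 1) le_rfl
    rw [Nat.sub_self, Nat.Ico_zero_eq_range] at this
    linarith
  have hv : ∀ j ≤ d + 1, -v j = ∑ i ∈ range j, u i := by
    intro j hj
    linarith [h j hj, sum_range_add_sum_Ico u hj]
  have hsymm : ∀ j ≤ d + 1, -v (d + 1 - j) = -v j := by
    intro j hj
    have hcompl := hrefl (d + 1 - j) (by omega)
    rw [Nat.sub_sub_self hj] at hcompl
    rw [hv _ (by omega), hv j hj]
    linarith [sum_range_add_sum_Ico u hj]
  refine ⟨hsymm, fun j hj => show 0 ≤ -v j from ?_⟩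
  wlog hlow : 2 * j ≤ d + 1 generalizing j
  · rw [← hsymm j hj]
    exact this _ (by omega) (by omega)
  rw [hv j hj]
  exact sum_nonneg fun i hi => hu.2 i (by have := mem_range.mp hi; omega)

end IsHalfDiff

section shortHCoeff

variable (a : ℕ → ℚ)

theorem shortHCoeff_self (d : ℕ) : shortHCoeff a d d = a d / 2 ^ d := by
  simp [shortHCoeff]

theorem shortHCoeff_succ_right {j e : ℕ} (h : j ≤ e) :
    shortHCoeff a j (e + 1) = shortHCoeff a (j + 1) (e + 1) + shortHCoeff a j e := by
  set g : ℕ → ℚ := fun k => ((e - j).choose (e + 1 - k) : ℚ) * a k / 2 ^ k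
  have hpascal : ∀ k ∈ Icc j e, ((e + 1 - j).choose (e + 1 - k) : ℚ) * a k / 2 ^ k
      = ((e - j).choose (e - k) : ℚ) * a k / 2 ^ k + g k := by
    intro k hk
    rw [mem_Icc] at hk
    have hke : e + 1 - k = (e - k) + 1 := by omega
    rw [show e + 1 - j = (e - j) + 1 by omega, hke, Nat.choose_succ_succ']
    simp only [g, hke]
    push_cast
    ring
  have hshift : shortHCoeff a (j + 1) (e + 1) = ∑ k ∈ Icc (j + 1) (e + 1), g k := by
    simp only [shortHCoeff, g, show e + 1 - (j + 1) = e - j by omega]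
  have hg_left : g j = 0 := by
    simp [g, Nat.choose_eq_zero_of_lt (show e - j < e + 1 - j by omega)]
  have hg_top : g (e + 1) = a (e + 1) / 2 ^ (e + 1) := by simp [g]
  calc shortHCoeff a j (e + 1)
      = shortHCoeff a j e + (∑ k ∈ Icc j e, g k + g (e + 1)) := by
        rw [shortHCoeff, sum_Icc_succ_top (by omega), sum_congr rfl hpascal, sum_add_distrib,
          hg_top, shortHCoeff]
        simp only [tsub_self, Nat.choose_zero_right, Nat.cast_one, one_mul]
        ring
    _ = shortHCoeff a (j + 1) (e + 1) + shortHCoeff a j e := by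
        rw [← sum_Icc_succ_top (by omega), ← add_sum_Ioc_eq_sum_Icc (by omega), hg_left,
          zero_add, ← Icc_add_one_left_eq_Ioc, hshift, add_comm]

theorem shortHCoeff_succ_eq_add_sum_Ico {j e : ℕ} (h : j ≤ e + 1) :
    shortHCoeff a j (e + 1)
      = a (e + 1) / 2 ^ (e + 1) + ∑ i ∈ Ico j (e + 1), shortHCoeff a i e := by
  have htelescope : ∑ i ∈ Ico j (e + 1), shortHCoeff a i e
      = -∑ i ∈ Ico j (e + 1), (shortHCoeff a (i + 1) (e + 1) - shortHCoeff a i (e + 1)) := by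
    rw [← sum_neg_distrib]
    refine sum_congr rfl fun i hi => ?_
    rw [shortHCoeff_succ_right a (Nat.lt_succ_iff.mp (mem_Ico.mp hi).2)]
    ring
  rw [htelescope, sum_Ico_sub (f := fun i => shortHCoeff a i (e + 1)) h, shortHCoeff_self]
  ring

theorem shortHCoeff_zero_left {d : ℕ}
    (hrec : 2 * a d = -∑ k ∈ range d, a k * (d.choose k : ℚ) * 2 ^ (d - k)) :
    shortHCoeff a 0 d = -(a d / 2 ^ d) := by
  have hterm : ∀ k ∈ range d, a k * (d.choose k : ℚ) * 2 ^ (d - k)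
      = 2 ^ d * ((d.choose (d - k) : ℚ) * a k / 2 ^ k) := by
    intro k hk
    have hkd : k ≤ d := (mem_range.mp hk).le
    rw [Nat.choose_symm hkd, ← Nat.sub_add_cancel hkd, pow_add, Nat.add_sub_cancel]
    field_simp
  rw [sum_congr rfl hterm, ← mul_sum] at hrec
  rw [shortHCoeff, ← Nat.range_succ_eq_Icc_zero, sum_range_succ]
  simp only [Nat.sub_zero, Nat.sub_self, Nat.choose_zero_right, Nat.cast_one, one_mul]
  field_simp at hrec ⊢
  linarith

theorem isHalfDiff_shortHCoeff {e : ℕ}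
    (hrec : 2 * a (e + 1)
      = -∑ k ∈ range (e + 1), a k * ((e + 1).choose k : ℚ) * 2 ^ (e + 1 - k)) :
    IsHalfDiff (shortHCoeff a · e) (shortHCoeff a · (e + 1)) e := by
  intro j hj
  have hzero := shortHCoeff_succ_eq_add_sum_Ico a (Nat.zero_le (e + 1))
  rw [shortHCoeff_zero_left a hrec, Nat.Ico_zero_eq_range, ← sum_range_add_sum_Ico _ hj] at hzero
  linarith [shortHCoeff_succ_eq_add_sum_Ico a hj]

theorem symmNonneg_neg_shortHCoeff_two {A : ℚ} (hA : A ≤ 0)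
    (h0 : a 0 = 1) (h1 : a 1 = -1) (h2 : a 2 = A) :
    SymmNonneg 2 (fun j => -shortHCoeff a j 2) := by
  have hc0 : shortHCoeff a 0 2 = A / 4 := by
    norm_num [shortHCoeff, ← Nat.range_succ_eq_Icc_zero, sum_range_succ, h0, h1, h2]
  have hc1 : shortHCoeff a 1 2 = -1 / 2 + A / 4 := by
    norm_num [shortHCoeff, sum_Icc_succ_top, h1, h2]
  have hc2 : shortHCoeff a 2 2 = A / 4 := by
    norm_num [shortHCoeff_self, h2]
  constructor <;> intro j hj <;> interval_cases j <;> simp only [hc0, hc1, hc2] <;> linarith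

theorem symmNonneg_shortHCoeff_even
    (hrec : ∀ n, 3 ≤ n → 2 * a n = -∑ k ∈ range n, a k * (n.choose k : ℚ) * 2 ^ (n - k))
    (hbase : SymmNonneg 2 (fun j => -shortHCoeff a j 2)) :
    ∀ r, 1 ≤ r → SymmNonneg (2 * r) (fun j => (-1) ^ r * shortHCoeff a j (2 * r)) := by
  intro r hr
  induction r, hr using Nat.le_induction with
  | base => simpa using hbase
  | succ r hr ih =>
    have hodd := ((isHalfDiff_shortHCoeff a (hrec (2 * r + 1) (by omega))).const_mul
      ((-1) ^ r)).antisymmLowerNonneg ih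
    have heven := ((isHalfDiff_shortHCoeff a (hrec (2 * r + 1 + 1) (by omega))).const_mul
      ((-1) ^ r)).symmNonneg_neg hodd
    rw [show 2 * (r + 1) = 2 * r + 1 + 1 by ring]
    convert heven using 3
    ring

end shortHCoeff

theorem stmt_3 (A : ℚ) (hA : A ≤ 0) (a : ℕ → ℚ)
    (h0 : a 0 = 1) (h1 : a 1 = -1) (h2 : a 2 = A)
    (hrec : ∀ n, 3 ≤ n →
      2 * a n = -∑ k ∈ Finset.range n, a k * (n.choose k : ℚ) * 2 ^ (n - k))
    (c : ℕ → ℕ → ℚ)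
    (hc : ∀ j d, c j d = ∑ k ∈ Finset.Icc j d,
      ((d - j).choose (d - k) : ℚ) * a k / 2 ^ k) :
    ∀ m, 1 ≤ m →
      (∀ j, j ≤ 4 * m → 0 ≤ c j (4 * m)) ∧
      (∀ j, j ≤ 4 * m + 2 → c j (4 * m + 2) ≤ 0) := by
  obtain rfl : c = shortHCoeff a := funext fun j => funext (hc j)
  have hcol := symmNonneg_shortHCoeff_even a hrec (symmNonneg_neg_shortHCoeff_two a hA h0 h1 h2)
  intro m hm
  constructor
  · intro j hj
    have : 0 ≤ (-1) ^ (2 * m) * shortHCoeff a j (2 * (2 * m)) :=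
      (hcol (2 * m) (by omega)).2 j (by omega)
    rwa [pow_mul, neg_one_sq, one_pow, one_mul, ← mul_assoc] at this
  · intro j hj
    have : 0 ≤ (-1) ^ (2 * m + 1) * shortHCoeff a j (2 * (2 * m + 1)) :=
      (hcol (2 * m + 1) (by omega)).2 j (by omega)
    rw [pow_succ, pow_mul, neg_one_sq, one_pow, one_mul, neg_one_mul,
      show 2 * (2 * m + 1) = 4 * m + 2 by ring] at this
    linarith
end

section
/- Let a : ℕ → ℚ satisfy a(0)=1, a(1)=-1, a(2)=A with A ≤ 0, and a(n) = -(1/2)·∑_{k=0}^{n-1} a(k)·C(n,k)·2^{n-k} for n ≥ 3. Define c(j,d) = ∑_{k=j}^{d} 2^{-k}·C(d-j,d-k)·a(k). Then for every m ≥ 1: 0 = c(0,4m) ≤ c(1,4m) ≤ ⋯ ≤ c(2m,4m), i.e., the sequence j ↦ c(j,4m) is nonnegative and nondecreasing for 0 ≤ j ≤ 2m, with c(0,4m)=0. -/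
/-!
Put `b k = a k / 2 ^ k`, so that `c (j, d) = ∑ₗ C(d - j, l) b (j + l)`. Then the triangle obeys
the Pascal-type rule `c (j + 1, d + 1) = c (j, d + 1) - c (j, d)`, and the recursion for `a` says
exactly that `c (d, d) = -c (0, d)` for `d ≥ 3`. Summing the Pascal rule along row `d + 1` gives
`2 c (0, d + 1) = ∑ⱼ c (j, d)`; with this, induction on `d` shows
`c (j, d) = (-1) ^ d c (d - j, d)`, so odd rows sum to zero and `c (0, d) = 0` for even `d ≥ 4`.

Signs then travel down the first halves of the rows. If the first half of row `2h + 1` is `≤ 0`,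
row `2h + 2` increases from `0` along its first half, so it is `≥ 0` there. If the first half of
row `2h` is `≥ 0`, row `2h + 1` decreases along its first half, and its middle entry is `≥ 0` by
antisymmetry. As all of this is invariant under `c ↦ -c`, the signs repeat with period four,
starting from row `2`, which is `≤ 0` because `A ≤ 0`.
-/

open Finset

def moebiusCoeff {K : Type*} [Field K] (a : ℕ → K) (j d : ℕ) : K :=
  ∑ k ∈ Icc j d, ((d - j).choose (d - k) : K) * a k / 2 ^ k

structure IsMoebiusTriangle {K : Type*} [Field K] (T : ℕ → ℕ → K) : Prop where
  pascal : ∀ d j, j ≤ d → T (j + 1) (d + 1) = T j (d + 1) - T j d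
  diag : ∀ d, 3 ≤ d → T d d = -T 0 d
  row_two : T 0 2 = T 2 2

theorem sum_range_succ_eq_zero_of_eq_neg_reflect {K : Type*} [Field K] [CharZero K]
    {f : ℕ → K} {n : ℕ} (hf : ∀ j ≤ n, f j = -f (n - j)) : ∑ j ∈ range (n + 1), f j = 0 := by
  have hneg : ∑ j ∈ range (n + 1), f j = -∑ j ∈ range (n + 1), f j := by
    conv_rhs => rw [← sum_range_reflect]
    rw [← sum_neg_distrib]
    refine sum_congr rfl fun j hj => ?_
    rw [hf j (Nat.lt_succ_iff.1 (mem_range.1 hj)), Nat.add_sub_cancel]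
  exact CharZero.eq_neg_self_iff.1 hneg

section moebiusCoeff

variable {K : Type*} [Field K] (a : ℕ → K)

theorem moebiusCoeff_eq_sum_range {j d : ℕ} (h : j ≤ d) :
    moebiusCoeff a j d =
      ∑ l ∈ range (d - j + 1), ((d - j).choose l : K) * (a (j + l) / 2 ^ (j + l)) := by
  rw [moebiusCoeff, ← Ico_add_one_right_eq_Icc, sum_Ico_eq_sum_range,
    show d + 1 - j = d - j + 1 by omega]
  refine sum_congr rfl fun l hl => ?_
  rw [mem_range] at hl
  rw [show d - (j + l) = d - j - l by omega, Nat.choose_symm (by omega), mul_div_assoc]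

theorem moebiusCoeff_succ_succ {j d : ℕ} (h : j ≤ d) :
    moebiusCoeff a (j + 1) (d + 1) = moebiusCoeff a j (d + 1) - moebiusCoeff a j d := by
  rw [moebiusCoeff_eq_sum_range a h, moebiusCoeff_eq_sum_range a (by omega : j ≤ d + 1),
    moebiusCoeff_eq_sum_range a (by omega : j + 1 ≤ d + 1), show d + 1 - j = d - j + 1 by omega,
    show d + 1 - (j + 1) = d - j by omega,
    sum_choose_succ_mul (fun l _ => a (j + l) / 2 ^ (j + l))]
  simp only [← add_assoc, add_right_comm j 1]
  ring

theorem moebiusCoeff_self (d : ℕ) : moebiusCoeff a d d = a d / 2 ^ d := by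
  simp [moebiusCoeff, mul_div_assoc]

theorem moebiusCoeff_diag [CharZero K]
    (hrec : ∀ n, 3 ≤ n → 2 * a n = -∑ k ∈ range n, a k * (n.choose k : K) * 2 ^ (n - k))
    {d : ℕ} (hd : 3 ≤ d) : moebiusCoeff a d d = -moebiusCoeff a 0 d := by
  have hlow : ∑ k ∈ range d, (d.choose k : K) * (a k / 2 ^ k) =
      (∑ k ∈ range d, a k * (d.choose k : K) * 2 ^ (d - k)) / 2 ^ d := by
    rw [sum_div]
    refine sum_congr rfl fun k hk => ?_
    rw [← Nat.add_sub_cancel' (mem_range.1 hk).le, pow_add, Nat.add_sub_cancel_left]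
    field_simp
  rw [moebiusCoeff_self, moebiusCoeff_eq_sum_range a (Nat.zero_le d), Nat.sub_zero,
    sum_range_succ, Nat.choose_self]
  simp only [zero_add, Nat.cast_one, one_mul]
  rw [hlow]
  linear_combination (1 / 2 ^ d : K) * hrec d hd

theorem moebiusCoeff_zero_two [CharZero K] : moebiusCoeff a 0 2 = a 0 + a 1 + a 2 / 4 := by
  rw [moebiusCoeff_eq_sum_range a (by norm_num)]
  simp [sum_range_succ]
  ring

theorem moebiusCoeff_one_two [CharZero K] : moebiusCoeff a 1 2 = a 1 / 2 + a 2 / 4 := by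
  rw [moebiusCoeff_eq_sum_range a (by norm_num)]
  simp [sum_range_succ]
  ring

theorem isMoebiusTriangle_moebiusCoeff [CharZero K] (h01 : a 0 + a 1 = 0)
    (hrec : ∀ n, 3 ≤ n → 2 * a n = -∑ k ∈ range n, a k * (n.choose k : K) * 2 ^ (n - k)) :
    IsMoebiusTriangle (moebiusCoeff a) where
  pascal _ _ h := moebiusCoeff_succ_succ a h
  diag _ hd := moebiusCoeff_diag a hrec hd
  row_two := by
    rw [moebiusCoeff_zero_two, moebiusCoeff_self, h01]
    ring

end moebiusCoeff

namespace IsMoebiusTriangle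

section Field

variable {K : Type*} [Field K] {T : ℕ → ℕ → K}

theorem neg (hT : IsMoebiusTriangle T) : IsMoebiusTriangle (-T) where
  pascal d j h := by simp only [Pi.neg_apply, hT.pascal d j h]; ring
  diag d h := by simp only [Pi.neg_apply, hT.diag d h]
  row_two := by simp only [Pi.neg_apply, hT.row_two]

theorem two_mul_zero_succ (hT : IsMoebiusTriangle T) {d : ℕ} (hd : 2 ≤ d) :
    2 * T 0 (d + 1) = ∑ j ∈ range (d + 1), T j d := by
  have htele := sum_range_sub (fun j => T j (d + 1)) (d + 1)
  have hstep : ∀ j ∈ range (d + 1), T (j + 1) (d + 1) - T j (d + 1) = -T j d := fun j hj => by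
    rw [hT.pascal d j (Nat.lt_succ_iff.1 (mem_range.1 hj))]
    ring
  rw [sum_congr rfl hstep, sum_neg_distrib, hT.diag (d + 1) (by omega)] at htele
  linear_combination htele

variable [CharZero K]

theorem zero_succ_eq_zero (hT : IsMoebiusTriangle T) {d : ℕ} (hd : 2 ≤ d)
    (hsymm : ∀ j ≤ d, T j d = -T (d - j) d) :
    T 0 (d + 1) = 0 := by
  have := hT.two_mul_zero_succ hd
  rw [sum_range_succ_eq_zero_of_eq_neg_reflect hsymm] at this
  simpa using this

theorem symm_succ (hT : IsMoebiusTriangle T) {d : ℕ} (hd : 2 ≤ d)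
    (hsymm : ∀ j ≤ d, T j d = (-1) ^ d * T (d - j) d) :
    ∀ j ≤ d + 1, T j (d + 1) = (-1) ^ (d + 1) * T (d + 1 - j) (d + 1) := by
  intro j hj
  induction j with
  | zero =>
    rw [Nat.sub_zero, hT.diag (d + 1) (by omega)]
    rcases Nat.even_or_odd d with hev | hodd
    · rw [(Even.add_one hev).neg_one_pow]
      ring
    · have h0 : T 0 (d + 1) = 0 :=
        hT.zero_succ_eq_zero hd fun j hj => by rw [hsymm j hj, hodd.neg_one_pow, neg_one_mul]
      rw [h0]
      ring
  | succ j ih =>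
    have hmirror := hT.pascal d (d - j) (by omega)
    rw [show d - j + 1 = d + 1 - j by omega] at hmirror
    rw [hT.pascal d j (by omega), ih (by omega), hsymm j (by omega),
      show d + 1 - (j + 1) = d - j by omega, hmirror, pow_succ]
    ring

theorem symm (hT : IsMoebiusTriangle T) {d : ℕ} (hd : 2 ≤ d) :
    ∀ j ≤ d, T j d = (-1) ^ d * T (d - j) d := by
  induction d, hd using Nat.le_induction with
  | base =>
    intro j hj
    interval_cases j <;> simp [hT.row_two]
  | succ d hd ih => exact hT.symm_succ hd ih

theorem eq_neg_of_odd (hT : IsMoebiusTriangle T) {h : ℕ} (hh : 1 ≤ h) {j : ℕ} (hj : j ≤ 2 * h + 1) :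
    T j (2 * h + 1) = -T (2 * h + 1 - j) (2 * h + 1) := by
  rw [hT.symm (by omega) j hj, (odd_two_mul_add_one h).neg_one_pow, neg_one_mul]

theorem zero_even_eq_zero (hT : IsMoebiusTriangle T) {h : ℕ} (hh : 1 ≤ h) : T 0 (2 * h + 2) = 0 :=
  hT.zero_succ_eq_zero (by omega) fun _ hj => hT.eq_neg_of_odd hh hj

end Field

section Ordered

variable {K : Type*} [Field K] [LinearOrder K] [IsStrictOrderedRing K] {T : ℕ → ℕ → K}

theorem le_succ_of_nonpos (hT : IsMoebiusTriangle T) {j d : ℕ} (hj : j ≤ d) (h : T j d ≤ 0) :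
    T j (d + 1) ≤ T (j + 1) (d + 1) := by
  linarith [hT.pascal d j hj]

theorem succ_le_of_nonneg (hT : IsMoebiusTriangle T) {j d : ℕ} (hj : j ≤ d) (h : 0 ≤ T j d) :
    T (j + 1) (d + 1) ≤ T j (d + 1) := by
  linarith [hT.pascal d j hj]

theorem nonneg_even_of_nonpos (hT : IsMoebiusTriangle T) {h : ℕ} (hh : 1 ≤ h)
    (hrow : ∀ j ≤ h, T j (2 * h + 1) ≤ 0) :
    ∀ j ≤ h + 1, 0 ≤ T j (2 * h + 2) := by
  intro j hj
  induction j with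
  | zero => exact (hT.zero_even_eq_zero hh).ge
  | succ j ih =>
    exact (ih (by omega)).trans (hT.le_succ_of_nonpos (by omega) (hrow j (by omega)))

theorem nonneg_odd_of_nonneg (hT : IsMoebiusTriangle T) {h : ℕ} (hh : 1 ≤ h)
    (hrow : ∀ j ≤ h, 0 ≤ T j (2 * h)) :
    ∀ j ≤ h, 0 ≤ T j (2 * h + 1) := by
  have hmid : 0 ≤ T h (2 * h + 1) := by
    have hanti := hT.eq_neg_of_odd hh (j := h) (by omega)
    rw [show 2 * h + 1 - h = h + 1 by omega] at hanti
    linarith [hT.succ_le_of_nonneg (by omega) (hrow h le_rfl)]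
  intro j hj
  induction hj using Nat.decreasingInduction with
  | self => exact hmid
  | of_succ k hk ih => exact ih.trans (hT.succ_le_of_nonneg (by omega) (hrow k hk.le))

theorem nonpos_even_of_nonneg (hT : IsMoebiusTriangle T) {h : ℕ} (hh : 1 ≤ h)
    (hrow : ∀ j ≤ h, 0 ≤ T j (2 * h)) :
    ∀ j ≤ h + 1, T j (2 * h + 2) ≤ 0 := by
  intro j hj
  have hodd : ∀ j ≤ h, (-T) j (2 * h + 1) ≤ 0 := fun j hj =>
    neg_nonpos.2 (hT.nonneg_odd_of_nonneg hh hrow j hj)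
  exact neg_nonneg.1 (hT.neg.nonneg_even_of_nonpos hh hodd j hj)

theorem nonpos_four_mul_add_two (hT : IsMoebiusTriangle T) (hrow : ∀ j ≤ 1, T j 2 ≤ 0) (n : ℕ) :
    ∀ j ≤ 2 * n + 1, T j (2 * (2 * n + 1)) ≤ 0 := by
  induction n with
  | zero => simpa using hrow
  | succ n ih =>
    have hnext : ∀ j ≤ 2 * n + 2, 0 ≤ T j (2 * (2 * n + 2)) := fun j hj =>
      neg_nonpos.1 (hT.neg.nonpos_even_of_nonneg (by omega)
        (fun j hj => neg_nonneg.2 (ih j hj)) j hj)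
    rw [show 2 * (2 * (n + 1) + 1) = 2 * (2 * n + 2) + 2 by ring]
    exact hT.nonpos_even_of_nonneg (by omega) hnext

theorem row_four_mul (hT : IsMoebiusTriangle T) (hrow : ∀ j ≤ 1, T j 2 ≤ 0) {m : ℕ} (hm : 1 ≤ m) :
    T 0 (4 * m) = 0 ∧ (∀ j ≤ 2 * m, 0 ≤ T j (4 * m)) ∧
      ∀ j, j + 1 ≤ 2 * m → T j (4 * m) ≤ T (j + 1) (4 * m) := by
  obtain ⟨n, rfl⟩ : ∃ n, m = n + 1 := ⟨m - 1, by omega⟩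
  have hodd : ∀ j ≤ 2 * n + 1, T j (2 * (2 * n + 1) + 1) ≤ 0 := fun j hj =>
    neg_nonneg.1 (hT.neg.nonneg_odd_of_nonneg (by omega)
      (fun j hj => neg_nonneg.2 (hT.nonpos_four_mul_add_two hrow n j hj)) j hj)
  rw [show 4 * (n + 1) = 2 * (2 * n + 1) + 2 by ring, show 2 * (n + 1) = 2 * n + 1 + 1 by ring]
  exact ⟨hT.zero_even_eq_zero (by omega), hT.nonneg_even_of_nonpos (by omega) hodd,
    fun j hj => hT.le_succ_of_nonpos (by omega) (hodd j (by omega))⟩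

end Ordered

end IsMoebiusTriangle

theorem stmt_4 (A : ℚ) (hA : A ≤ 0) (a : ℕ → ℚ)
    (h0 : a 0 = 1) (h1 : a 1 = -1) (h2 : a 2 = A)
    (hrec : ∀ n, 3 ≤ n →
      2 * a n = -∑ k ∈ Finset.range n, a k * (n.choose k : ℚ) * 2 ^ (n - k))
    (c : ℕ → ℕ → ℚ)
    (hc : ∀ j d, c j d = ∑ k ∈ Finset.Icc j d,
      ((d - j).choose (d - k) : ℚ) * a k / 2 ^ k) :
    ∀ m, 1 ≤ m →
      c 0 (4 * m) = 0 ∧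
      (∀ j, j ≤ 2 * m → 0 ≤ c j (4 * m)) ∧
      (∀ j, j + 1 ≤ 2 * m → c j (4 * m) ≤ c (j + 1) (4 * m)) := by
  intro m hm
  obtain rfl : c = moebiusCoeff a := funext₂ hc
  have hT := isMoebiusTriangle_moebiusCoeff a (by rw [h0, h1]; ring) hrec
  refine hT.row_four_mul (fun j hj => ?_) hm
  interval_cases j
  · rw [moebiusCoeff_zero_two, h0, h1, h2]
    linarith
  · rw [moebiusCoeff_one_two, h1, h2]
    linarith
end

section
/- Let b : ℕ → ℚ satisfy b(0)=1, b(1)=-1, b(2)=A with A ≤ 0, and b(n) = -(1/2)·∑_{k=0}^{n-1} b(k)·C(n+1,k+1) for n ≥ 3. Define s(j,d) = ∑_{k=j}^{d} (1/(k+1))·C(d-j,d-k)·b(k). Then for every m ≥ 1: s(j,4m) ≥ 0 for all 0 ≤ j ≤ 4m, and s(j,4m+2) ≤ 0 for all 0 ≤ j ≤ 4m+2. -/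
/-!
The table `s` obeys the Pascal rule `s j (d+1) = s j d + s (j+1) (d+1)`, and the recurrence for
`b` at `n` says `s 0 n = -s n n`. At odd `n`, together with the Pascal rule, this makes every row
(anti)symmetric, `s j d = (-1)^d s (d-j) d`, so odd rows sum to zero and, at even `d ≥ 4`, the
recurrence forces `s d d = 0`. Telescoping the Pascal rule then writes the left half of an odd
row `d+1` as half a central block sum of row `d`, and the entries of row `d+2` as minus partial
sums of row `d+1`: the sign of the even row `d` passes, reversed, to row `d+2`. Row `2` is `≤ 0`
because `A ≤ 0`.
-/

open Finset

def sCoeff (b : ℕ → ℚ) (j d : ℕ) : ℚ :=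
  ∑ k ∈ Icc j d, (1 / (k + 1 : ℚ)) * ((d - j).choose (d - k) : ℚ) * b k

def RecurrenceAt (b : ℕ → ℚ) (n : ℕ) : Prop :=
  2 * b n = -∑ k ∈ range n, b k * ((n + 1).choose (k + 1) : ℚ)

section

variable {b : ℕ → ℚ}

theorem sCoeff_self (d : ℕ) : sCoeff b d d = b d / (d + 1) := by
  simp [sCoeff, div_eq_inv_mul]

theorem sCoeff_eq_sum_range {j d : ℕ} (hj : j ≤ d) :
    sCoeff b j d =
      ∑ k ∈ range (d + 1), (1 / (k + 1 : ℚ)) * ((d - j).choose (d - k) : ℚ) * b k := by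
  refine sum_subset (fun k hk => by simp at hk ⊢; omega) fun k hk hkj => ?_
  simp only [mem_range, mem_Icc] at hk hkj
  rw [Nat.choose_eq_zero_of_lt (by omega), Nat.cast_zero, mul_zero, zero_mul]

theorem sCoeff_succ_right {j d : ℕ} (hj : j ≤ d) :
    sCoeff b j (d + 1) = sCoeff b j d + sCoeff b (j + 1) (d + 1) := by
  rw [sCoeff_eq_sum_range (by omega), sCoeff_eq_sum_range hj, sCoeff_eq_sum_range (by omega),
    sum_range_succ, sum_range_succ _ (d + 1), ← add_assoc, ← sum_add_distrib]
  congr 1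
  · refine sum_congr rfl fun k hk => ?_
    rw [mem_range] at hk
    rw [show d + 1 - j = d - j + 1 by omega, show d + 1 - k = d - k + 1 by omega,
      Nat.choose_succ_succ, show d + 1 - (j + 1) = d - j by omega]
    push_cast
    ring
  · simp

theorem sCoeff_succ_right_eq_sum {j d : ℕ} (hj : j ≤ d + 1) :
    sCoeff b j (d + 1) = ∑ i ∈ Ico j (d + 1), sCoeff b i d + sCoeff b (d + 1) (d + 1) := by
  have hpascal : ∀ i ∈ Ico j (d + 1),
      sCoeff b i d = -sCoeff b (i + 1) (d + 1) - -sCoeff b i (d + 1) := fun i hi => by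
    rw [sCoeff_succ_right (j := i) (by rw [mem_Ico] at hi; omega)]
    ring
  rw [sum_congr rfl hpascal, sum_Ico_sub (fun i => -sCoeff b i (d + 1)) hj]
  ring

theorem add_one_mul_sCoeff_zero (d : ℕ) :
    (d + 1 : ℚ) * sCoeff b 0 d =
      ∑ k ∈ range (d + 1), b k * ((d + 1).choose (k + 1) : ℚ) := by
  rw [sCoeff_eq_sum_range (Nat.zero_le d), mul_sum]
  refine sum_congr rfl fun k hk => ?_
  have hchoose :
      ((d + 1 : ℕ) : ℚ) * d.choose k = ((d + 1).choose (k + 1) : ℚ) * (k + 1 : ℕ) := by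
    exact_mod_cast Nat.add_one_mul_choose_eq d k
  rw [Nat.sub_zero, Nat.choose_symm (by simpa [Nat.lt_succ_iff] using hk)]
  push_cast at hchoose
  field_simp
  linear_combination b k * hchoose

theorem sCoeff_zero_eq_neg_self {d : ℕ} (hrec : RecurrenceAt b d) :
    sCoeff b 0 d = -sCoeff b d d := by
  have h := add_one_mul_sCoeff_zero (b := b) d
  rw [sum_range_succ, Nat.choose_self, Nat.cast_one, mul_one] at h
  rw [sCoeff_self]
  field_simp
  unfold RecurrenceAt at hrec
  linarith

theorem sum_sCoeff_eq_zero_of_odd {d : ℕ} (hd : Odd d)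
    (hrow : ∀ j ≤ d, sCoeff b j d = (-1) ^ d * sCoeff b (d - j) d) :
    ∑ i ∈ range (d + 1), sCoeff b i d = 0 := by
  have hreflect := sum_range_reflect (fun i => sCoeff b i d) (d + 1)
  have hanti :
      ∑ i ∈ range (d + 1), sCoeff b i d = -∑ i ∈ range (d + 1), sCoeff b (d - i) d := by
    rw [← sum_neg_distrib]
    refine sum_congr rfl fun i hi => ?_
    rw [hrow i (by rw [mem_range] at hi; omega), hd.neg_one_pow, neg_one_mul]
  simp only [add_tsub_cancel_right] at hreflect
  linarith

theorem sCoeff_symm_succ {d : ℕ}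
    (hrow : ∀ j ≤ d, sCoeff b j d = (-1) ^ d * sCoeff b (d - j) d)
    (hedge : sCoeff b 0 (d + 1) = (-1) ^ (d + 1) * sCoeff b (d + 1) (d + 1)) :
    ∀ j ≤ d + 1, sCoeff b j (d + 1) = (-1) ^ (d + 1) * sCoeff b (d + 1 - j) (d + 1) := by
  have hsq : ((-1 : ℚ) ^ (d + 1)) ^ 2 = 1 := by rw [← pow_mul, pow_mul', neg_one_sq, one_pow]
  suffices h :
      ∀ t ≤ d + 1, sCoeff b (d + 1 - t) (d + 1) = (-1) ^ (d + 1) * sCoeff b t (d + 1) by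
    intro j hj
    simpa [Nat.sub_sub_self hj] using h (d + 1 - j) (by omega)
  intro t ht
  induction t with
  | zero =>
    rw [Nat.sub_zero]
    linear_combination -(-1) ^ (d + 1) * hedge - sCoeff b (d + 1) (d + 1) * hsq
  | succ t ih =>
    have hleft := sCoeff_succ_right (b := b) (show d - t ≤ d by omega)
    rw [show d - t + 1 = d + 1 - t by omega, ih (by omega)] at hleft
    rw [show d + 1 - (t + 1) = d - t by omega, hleft, sCoeff_succ_right (show t ≤ d by omega),
      hrow (d - t) (by omega), Nat.sub_sub_self (by omega), pow_succ]
    ring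

theorem sCoeff_symm (hodd : ∀ n, Odd n → RecurrenceAt b n) :
    ∀ d, ∀ j ≤ d, sCoeff b j d = (-1) ^ d * sCoeff b (d - j) d := by
  intro d
  induction d with
  | zero =>
    intro j hj
    obtain rfl : j = 0 := by omega
    simp
  | succ d ih =>
    refine sCoeff_symm_succ ih ?_
    rcases Nat.even_or_odd (d + 1) with heven | hodd'
    · have hd : Odd d := Nat.even_add_one.mp heven |> Nat.not_even_iff_odd.mp
      rw [heven.neg_one_pow, one_mul, sCoeff_succ_right_eq_sum (Nat.zero_le _), ← range_eq_Ico,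
        sum_sCoeff_eq_zero_of_odd hd ih, zero_add]
    · rw [hodd'.neg_one_pow, neg_one_mul]
      exact sCoeff_zero_eq_neg_self (hodd _ hodd')

theorem sCoeff_self_eq_zero_of_even (hodd : ∀ n, Odd n → RecurrenceAt b n) {d : ℕ}
    (hd : Even d) (hrec : RecurrenceAt b d) : sCoeff b d d = 0 := by
  have hsymm := sCoeff_symm hodd d 0 (Nat.zero_le d)
  rw [hd.neg_one_pow, one_mul, Nat.sub_zero, sCoeff_zero_eq_neg_self hrec] at hsymm
  linarith

theorem two_mul_sCoeff_succ_of_even (hodd : ∀ n, Odd n → RecurrenceAt b n) {d j : ℕ}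
    (hd : Even d) (hj : 2 * j ≤ d + 1) :
    2 * sCoeff b j (d + 1) = ∑ i ∈ Ico j (d + 1 - j), sCoeff b i d := by
  have hanti := sCoeff_symm hodd (d + 1) j (by omega)
  rw [(Even.add_one hd).neg_one_pow, neg_one_mul] at hanti
  have hsplit := sum_Ico_consecutive (fun i => sCoeff b i d) (show j ≤ d + 1 - j by omega)
    (show d + 1 - j ≤ d + 1 by omega)
  have h1 := sCoeff_succ_right_eq_sum (b := b) (show j ≤ d + 1 by omega)
  have h2 := sCoeff_succ_right_eq_sum (b := b) (show d + 1 - j ≤ d + 1 by omega)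
  linarith

theorem mul_sCoeff_add_two_nonpos (hodd : ∀ n, Odd n → RecurrenceAt b n) {d : ℕ} (hd : Even d)
    (hrec : RecurrenceAt b (d + 2)) {ε : ℚ} (hrow : ∀ j ≤ d, 0 ≤ ε * sCoeff b j d) :
    ∀ j ≤ d + 2, ε * sCoeff b j (d + 2) ≤ 0 := by
  have hd2 : Even (d + 2) := hd.add even_two
  have hmid : ∀ i, 2 * i ≤ d → 0 ≤ ε * sCoeff b i (d + 1) := fun i hi => by
    have h := two_mul_sCoeff_succ_of_even hodd hd (j := i) (by omega)
    have hsum : 0 ≤ ∑ k ∈ Ico i (d + 1 - i), ε * sCoeff b k d :=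
      sum_nonneg fun k hk => hrow k (by rw [mem_Ico] at hk; omega)
    rw [← mul_sum, ← h] at hsum
    linarith
  have hlow : ∀ j, 2 * j ≤ d + 2 → ε * sCoeff b j (d + 2) ≤ 0 := fun j hj => by
    have hzero := sum_sCoeff_eq_zero_of_odd (Even.add_one hd) (sCoeff_symm hodd (d + 1))
    rw [range_eq_Ico, ← sum_Ico_consecutive _ (Nat.zero_le j) (show j ≤ d + 2 by omega)]
      at hzero
    have htel := sCoeff_succ_right_eq_sum (b := b) (show j ≤ d + 2 by omega)
    rw [sCoeff_self_eq_zero_of_even hodd hd2 hrec, add_zero] at htel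
    have hhead : 0 ≤ ∑ i ∈ Ico 0 j, ε * sCoeff b i (d + 1) :=
      sum_nonneg fun i hi => hmid i (by rw [mem_Ico] at hi; omega)
    rw [← mul_sum] at hhead
    calc ε * sCoeff b j (d + 2) = -(ε * ∑ i ∈ Ico 0 j, sCoeff b i (d + 1)) := by
          rw [htel]; linear_combination ε * hzero
      _ ≤ 0 := neg_nonpos.mpr hhead
  intro j hj
  rcases le_or_gt (2 * j) (d + 2) with hj' | hj'
  · exact hlow j hj'
  · rw [sCoeff_symm hodd (d + 2) j hj, hd2.neg_one_pow, one_mul]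
    exact hlow (d + 2 - j) (by omega)

theorem neg_one_pow_mul_sCoeff_nonneg (hrec1 : RecurrenceAt b 1)
    (hrec : ∀ n, 3 ≤ n → RecurrenceAt b n) (hrow2 : ∀ j ≤ 2, sCoeff b j 2 ≤ 0) :
    ∀ n, 1 ≤ n → ∀ j ≤ 2 * n, 0 ≤ (-1) ^ n * sCoeff b j (2 * n) := by
  have hodd : ∀ n, Odd n → RecurrenceAt b n := fun n hn => by
    rcases Nat.lt_or_ge n 3 with hn3 | hn3
    · obtain rfl : n = 1 := by obtain ⟨k, rfl⟩ := hn; omega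
      exact hrec1
    · exact hrec n hn3
  intro n hn
  induction n, hn using Nat.le_induction with
  | base => simpa using hrow2
  | succ n hn ih =>
    have h := mul_sCoeff_add_two_nonpos hodd (even_two_mul n) (hrec _ (by omega)) ih
    intro j hj
    rw [show 2 * (n + 1) = 2 * n + 2 by ring] at hj ⊢
    rw [pow_succ, mul_comm _ (-1 : ℚ), mul_assoc]
    linarith [h j (by omega)]

theorem sCoeff_two_nonpos (h0 : b 0 = 1) (h1 : b 1 = -1) (hb2 : b 2 ≤ 0) :
    ∀ j ≤ 2, sCoeff b j 2 ≤ 0 := by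
  intro j hj
  interval_cases j <;> simp [sCoeff, sum_Icc_succ_top, h0, h1] <;> linarith

end

theorem stmt_9 (A : ℚ) (hA : A ≤ 0) (b : ℕ → ℚ)
    (h0 : b 0 = 1) (h1 : b 1 = -1) (h2 : b 2 = A)
    (hrec : ∀ n, 3 ≤ n →
      2 * b n = -∑ k ∈ Finset.range n, b k * ((n + 1).choose (k + 1) : ℚ))
    (s : ℕ → ℕ → ℚ)
    (hs : ∀ j d, s j d = ∑ k ∈ Finset.Icc j d,
      (1 / (k + 1 : ℚ)) * ((d - j).choose (d - k) : ℚ) * b k) :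
    ∀ m, 1 ≤ m →
      (∀ j, j ≤ 4 * m → 0 ≤ s j (4 * m)) ∧
      (∀ j, j ≤ 4 * m + 2 → s j (4 * m + 2) ≤ 0) := by
  obtain rfl : s = sCoeff b := funext₂ hs
  have hrec1 : RecurrenceAt b 1 := by norm_num [RecurrenceAt, h0, h1]
  have hsign := neg_one_pow_mul_sCoeff_nonneg hrec1 hrec (sCoeff_two_nonpos h0 h1 (h2 ▸ hA))
  intro m hm
  constructor
  · intro j hj
    have h := hsign (2 * m) (by omega) j (by omega)
    rwa [pow_mul, neg_one_sq, one_pow, one_mul, show 2 * (2 * m) = 4 * m by ring] at h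
  · intro j hj
    have h := hsign (2 * m + 1) (by omega) j (by omega)
    rw [pow_succ, pow_mul, neg_one_sq, one_pow, one_mul,
      show 2 * (2 * m + 1) = 4 * m + 2 by ring] at h
    linarith
end

section
/- Define a : ℕ → ℤ by a(0)=1, a(1)=-1, a(2)=A, and for n ≥ 3, 2·a(n) = -(∑_{k=0}^{n-2} a(k)·C(n-1,k)·2^{n-1-k} + ∑_{k=0}^{n-1} a(k)·C(n,k)·2^{n-k}). Then for all n ≥ 1, ∑_{k=0}^{2n-1} a(k)·C(2n,k)·2^{2n-k} = 0. -/
/-!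
Let `L` be the linear functional on `ℤ[X]` with `L (X ^ k) = a k`. Then
`∑ k ≤ n, a k * n.choose k * 2 ^ (n - k) = L ((X + 2) ^ n)`, so the claim is
`L (X ^ 2n) = L ((X + 2) ^ 2n)`, which holds once `L` is invariant under the reflection
`σ : X ↦ -X - 2`. The defect `D = L - L ∘ σ` vanishes on the `σ`-invariant polynomial
`(X * (X + 2)) ^ m = X ^ 2m + (lower terms)`, so `D (X ^ 2m) = 0` as soon as `D` vanishes in lower
degrees. In odd degrees the recursion says exactly `D (X ^ (2m + 3)) = D (X ^ (2m + 2))`, and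
`D X = 2 * (a 0 + a 1) = 0`.
-/

open Polynomial Finset

section
variable {R : Type*} [CommRing R]

noncomputable def momentFunctional (a : ℕ → R) : R[X] →ₗ[R] R :=
  lsum fun k => LinearMap.toSpanSingleton R R (a k)

theorem momentFunctional_monomial (a : ℕ → R) (k : ℕ) (r : R) :
    momentFunctional a (monomial k r) = r * a k := by
  simp [momentFunctional, sum_monomial_index]

theorem momentFunctional_X_pow (a : ℕ → R) (k : ℕ) : momentFunctional a (X ^ k) = a k := by
  rw [← monomial_one_right_eq_X_pow, momentFunctional_monomial, one_mul]

theorem momentFunctional_X_add_C_pow (a : ℕ → R) (c : R) (n : ℕ) :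
    momentFunctional a ((X + C c) ^ n) =
      ∑ k ∈ range (n + 1), a k * n.choose k * c ^ (n - k) := by
  nontriviality R
  rw [as_sum_range' ((X + C c) ^ n) (n + 1) (by rw [natDegree_pow_X_add_C]; omega), map_sum]
  refine sum_congr rfl fun k _ => ?_
  rw [momentFunctional_monomial, coeff_X_add_C_pow]
  ring

theorem LinearMap.degreeLT_le_ker {M : Type*} [AddCommGroup M] [Module R M] (D : R[X] →ₗ[R] M)
    {k : ℕ} (h : ∀ j < k, D (X ^ j) = 0) : degreeLT R k ≤ LinearMap.ker D := by
  classical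
  rw [degreeLT_eq_span_X_pow, Submodule.span_le, coe_image, Set.image_subset_iff]
  intro j hj
  exact h j (by simpa using hj)

noncomputable def reflectionDefect (a : ℕ → R) (c : R) : R[X] →ₗ[R] R :=
  momentFunctional a - momentFunctional a ∘ₗ (aeval (-X - C c)).toLinearMap

theorem reflectionDefect_apply (a : ℕ → R) (c : R) (p : R[X]) :
    reflectionDefect a c p = momentFunctional a p - momentFunctional a (aeval (-X - C c) p) :=
  rfl

theorem reflectionDefect_X_pow (a : ℕ → R) (c : R) (n : ℕ) :
    reflectionDefect a c (X ^ n) =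
      a n - (-1) ^ n * ∑ k ∈ range (n + 1), a k * n.choose k * c ^ (n - k) := by
  have : aeval (-X - C c) (X ^ n : R[X]) = (-1 : R) ^ n • ((X + C c) ^ n : R[X]) := by
    rw [map_pow, aeval_X, ← _root_.smul_pow, neg_one_smul, neg_add']
  rw [reflectionDefect_apply, this, map_smul, momentFunctional_X_pow,
    momentFunctional_X_add_C_pow, smul_eq_mul]

theorem aeval_neg_X_sub_C_X_mul_X_add_C (c : R) :
    aeval (-X - C c) (X * (X + C c)) = X * (X + C c) := by
  simp only [map_mul, map_add, aeval_X, aeval_C, algebraMap_eq]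
  ring

theorem reflectionDefect_X_pow_two_mul (a : ℕ → R) (c : R) (m : ℕ)
    (h : ∀ j < 2 * m, reflectionDefect a c (X ^ j) = 0) :
    reflectionDefect a c (X ^ (2 * m)) = 0 := by
  nontriviality R
  rcases m.eq_zero_or_pos with rfl | hm
  · simp [reflectionDefect_apply]
  have hmonic : IsMonicOfDegree ((X * (X + C c)) ^ m : R[X]) (2 * m) :=
    ((isMonicOfDegree_X R).mul (isMonicOfDegree_X_add_one c)).pow m
  have hlow : X ^ (2 * m) - (X * (X + C c)) ^ m ∈ LinearMap.ker (reflectionDefect a c) :=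
    LinearMap.degreeLT_le_ker _ h <| mem_degreeLT.2 <| (degree_le_natDegree).trans_lt <|
      WithBot.coe_lt_coe.2 <| (isMonicOfDegree_X_pow R _).natDegree_sub_lt (by positivity) hmonic
  have hsymm : reflectionDefect a c ((X * (X + C c)) ^ m) = 0 := by
    rw [reflectionDefect_apply, map_pow (aeval (-X - C c)), aeval_neg_X_sub_C_X_mul_X_add_C,
      sub_self]
  rw [LinearMap.mem_ker, map_sub, hsymm, sub_zero] at hlow
  exact hlow

theorem reflectionDefect_X_pow_eq_zero (a : ℕ → R) (c : R)
    (hodd : ∀ m, (∀ j < 2 * m + 1, reflectionDefect a c (X ^ j) = 0) →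
      reflectionDefect a c (X ^ (2 * m + 1)) = 0) (n : ℕ) :
    reflectionDefect a c (X ^ n) = 0 := by
  induction n using Nat.strong_induction_on with
  | _ n ih =>
    obtain ⟨m, rfl | rfl⟩ := n.even_or_odd'
    · exact reflectionDefect_X_pow_two_mul a c m ih
    · exact hodd m ih
end

theorem stmt_11_general (a : ℕ → ℤ)
    (h0 : a 0 = 1) (h1 : a 1 = -1)
    (hrec : ∀ n, 3 ≤ n →
      2 * a n = -((∑ k ∈ Finset.range (n - 1), a k * ((n - 1).choose k : ℤ) * 2 ^ (n - 1 - k)) +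
        ∑ k ∈ Finset.range n, a k * (n.choose k : ℤ) * 2 ^ (n - k))) :
    ∀ n, 1 ≤ n →
      ∑ k ∈ Finset.range (2 * n), a k * ((2 * n).choose k : ℤ) * 2 ^ (2 * n - k) = 0 := by
  have hodd : ∀ m, (∀ j < 2 * m + 1, reflectionDefect a 2 (X ^ j) = 0) →
      reflectionDefect a 2 (X ^ (2 * m + 1)) = 0 := by
    rintro (_ | m) hlow
    · rw [reflectionDefect_X_pow]
      simp [sum_range_succ, h0, h1]
    · have hstep := hrec (2 * m + 3) (by omega)
      have hprev := hlow (2 * m + 2) (by omega)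
      rw [show 2 * m + 3 - 1 = 2 * m + 2 by omega] at hstep
      rw [show 2 * (m + 1) + 1 = 2 * m + 3 by ring, reflectionDefect_X_pow, sum_range_succ,
        Odd.neg_one_pow ⟨m + 1, by ring⟩]
      rw [reflectionDefect_X_pow, sum_range_succ, Even.neg_one_pow ⟨m + 1, by ring⟩] at hprev
      simp only [Nat.choose_self, Nat.sub_self, pow_zero, Nat.cast_one, mul_one] at hprev ⊢
      linarith
  intro n _
  have h := reflectionDefect_X_pow_eq_zero a 2 hodd (2 * n)
  rw [reflectionDefect_X_pow, sum_range_succ, (even_two_mul n).neg_one_pow] at h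
  simpa using h

theorem stmt_11 (A : ℤ) (a : ℕ → ℤ)
    (h0 : a 0 = 1) (h1 : a 1 = -1) (h2 : a 2 = A)
    (hrec : ∀ n, 3 ≤ n →
      2 * a n = -((∑ k ∈ Finset.range (n - 1), a k * ((n - 1).choose k : ℤ) * 2 ^ (n - 1 - k)) +
        ∑ k ∈ Finset.range n, a k * (n.choose k : ℤ) * 2 ^ (n - k))) :
    ∀ n, 1 ≤ n →
      ∑ k ∈ Finset.range (2 * n), a k * ((2 * n).choose k : ℤ) * 2 ^ (2 * n - k) = 0 :=
  stmt_11_general a h0 h1 hrec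
end

section
/- Let a : ℕ → ℚ be the cubical Gromov coefficients: a(0)=1, a(1)=-1, a(2)=A, and 2·a(n) = -(∑_{k=0}^{n-2} a(k)·C(n-1,k)·2^{n-1-k} + ∑_{k=0}^{n-1} a(k)·C(n,k)·2^{n-k}) for n ≥ 3. Define c(j,d) = ∑_{k=j}^{d} 2^{-k}·C(d-j,d-k)·a(k). Then for all d ≥ 3, 2·(c(0,d) + c(d,d)) = c(d-1,d-1) - c(0,d-1). -/
/-!
With `S m = ∑_{k ≤ m} C(m,k) a(k) 2^{m-k}` (`binomialTwoSum a m`) we have `c(0,m) = S m / 2^m`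
and `c(m,m) = a(m) / 2^m`. The two sums in the recurrence are `S (n-1) - a(n-1)` and
`S n - a(n)`, so it says exactly `S n + a n = a (n-1) - S (n-1)`; dividing by `2^n` gives the
identity.
-/

open Finset

namespace CubicalGromov

def binomialTwoSum (a : ℕ → ℚ) (m : ℕ) : ℚ :=
  ∑ k ∈ range (m + 1), a k * (m.choose k : ℚ) * 2 ^ (m - k)

theorem binomialTwoSum_eq (a : ℕ → ℚ) (m : ℕ) :
    binomialTwoSum a m = ∑ k ∈ range m, a k * (m.choose k : ℚ) * 2 ^ (m - k) + a m := by
  simp [binomialTwoSum, sum_range_succ]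

theorem sum_Icc_zero_choose_div_pow (a : ℕ → ℚ) (m : ℕ) :
    ∑ k ∈ Icc 0 m, ((m - 0).choose (m - k) : ℚ) * a k / 2 ^ k = binomialTwoSum a m / 2 ^ m := by
  rw [binomialTwoSum, sum_div, ← Nat.range_succ_eq_Icc_zero]
  refine sum_congr rfl fun k hk => ?_
  have hkm : k ≤ m := Nat.lt_succ_iff.mp (mem_range.mp hk)
  rw [Nat.sub_zero, Nat.choose_symm hkm, pow_sub₀ _ two_ne_zero hkm]
  field_simp

theorem sum_Icc_self_choose_div_pow (a : ℕ → ℚ) (m : ℕ) :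
    ∑ k ∈ Icc m m, ((m - m).choose (m - k) : ℚ) * a k / 2 ^ k = a m / 2 ^ m := by
  simp

theorem binomialTwoSum_add_eq_of_recurrence (a : ℕ → ℚ) (n : ℕ)
    (hrec : 2 * a n = -((∑ k ∈ range (n - 1), a k * ((n - 1).choose k : ℚ) * 2 ^ (n - 1 - k)) +
        ∑ k ∈ range n, a k * (n.choose k : ℚ) * 2 ^ (n - k))) :
    binomialTwoSum a n + a n = a (n - 1) - binomialTwoSum a (n - 1) := by
  rw [binomialTwoSum_eq, binomialTwoSum_eq]
  linarith

end CubicalGromov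

open CubicalGromov in
theorem stmt_13_general (a : ℕ → ℚ)
    (hrec : ∀ n, 3 ≤ n →
      2 * a n = -((∑ k ∈ Finset.range (n - 1), a k * ((n - 1).choose k : ℚ) * 2 ^ (n - 1 - k)) +
        ∑ k ∈ Finset.range n, a k * (n.choose k : ℚ) * 2 ^ (n - k)))
    (c : ℕ → ℕ → ℚ)
    (hc : ∀ j d, c j d = ∑ k ∈ Finset.Icc j d,
      ((d - j).choose (d - k) : ℚ) * a k / 2 ^ k) :
    ∀ d, 3 ≤ d → 2 * (c 0 d + c d d) = c (d - 1) (d - 1) - c 0 (d - 1) := by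
  intro d hd
  have key := binomialTwoSum_add_eq_of_recurrence a d (hrec d hd)
  simp only [hc, sum_Icc_zero_choose_div_pow, sum_Icc_self_choose_div_pow]
  obtain ⟨m, rfl⟩ : ∃ m, d = m + 1 := ⟨d - 1, by omega⟩
  rw [Nat.add_sub_cancel] at key ⊢
  rw [pow_succ]
  field_simp
  linear_combination key

theorem stmt_13 (A : ℚ) (a : ℕ → ℚ)
    (h0 : a 0 = 1) (h1 : a 1 = -1) (h2 : a 2 = A)
    (hrec : ∀ n, 3 ≤ n →
      2 * a n = -((∑ k ∈ Finset.range (n - 1), a k * ((n - 1).choose k : ℚ) * 2 ^ (n - 1 - k)) +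
        ∑ k ∈ Finset.range n, a k * (n.choose k : ℚ) * 2 ^ (n - k)))
    (c : ℕ → ℕ → ℚ)
    (hc : ∀ j d, c j d = ∑ k ∈ Finset.Icc j d,
      ((d - j).choose (d - k) : ℚ) * a k / 2 ^ k) :
    ∀ d, 3 ≤ d → 2 * (c 0 d + c d d) = c (d - 1) (d - 1) - c 0 (d - 1) :=
  stmt_13_general a hrec c hc
end

section
/- Let a : ℕ → ℚ be the cubical Gromov coefficients: a(0)=1, a(1)=-1, a(2)=A with A ≤ -1, and 2·a(n) = -(∑_{k=0}^{n-2} a(k)·C(n-1,k)·2^{n-1-k} + ∑_{k=0}^{n-1} a(k)·C(n,k)·2^{n-k}) for n ≥ 3. Define c(j,d) = ∑_{k=j}^{d} 2^{-k}·C(d-j,d-k)·a(k). Then for every m ≥ 1: c(j,4m) ≥ 0 for all 0 ≤ j ≤ 4m, and c(j,4m+2) ≤ 0 for all 0 ≤ j ≤ 4m+2. -/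
/-!
Pascal's rule `c(j,d+1) = c(j,d) + c(j+1,d+1)` makes each entry of row `d+1` a sum of consecutive
entries of row `d` plus a later entry of row `d+1`. Together with the symmetry
`c(j,d) = (-1)^d c(d-j,d)` this propagates signs: if row `2h` has sign `s`, the right half of the
antisymmetric row `2h+1` is minus half a sum of entries of row `2h`, so it has sign `-s`; and since
`a(2h+2) = a(2h+1)`, the last entry of row `2h+2` is half that of row `2h+1`, so row `2h+2`, whose
right half is a sum of entries of row `2h+1` plus its last entry, has sign `-s` too. Row `2` is
`(A/4, A/4 - 1/2, A/4)`, hence nonpositive.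

The symmetry is proved row by row: Pascal's rule carries it along a row once it holds at the ends.
At the ends of an even row `e+1` it holds because the antisymmetric row `e` sums to zero; at the
ends of an odd row `n+1`, where `2^n c(0,n) = a(n)`, the recurrence reads `2^(n+1) c(0,n+1) = -a(n+1)`.
-/

open Finset

namespace CubicalGromov

def coeff (a : ℕ → ℚ) (j d : ℕ) : ℚ :=
  ∑ k ∈ Icc j d, ((d - j).choose (d - k) : ℚ) * a k / 2 ^ k

def Recurrence (a : ℕ → ℚ) : Prop :=
  ∀ n, 3 ≤ n →
    2 * a n = -((∑ k ∈ range (n - 1), a k * ((n - 1).choose k : ℚ) * 2 ^ (n - 1 - k)) +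
      ∑ k ∈ range n, a k * (n.choose k : ℚ) * 2 ^ (n - k))

variable {a : ℕ → ℚ}

theorem coeff_self (d : ℕ) : coeff a d d = a d / 2 ^ d := by
  simp [coeff]

theorem coeff_succ_right {j d : ℕ} (hj : j ≤ d) :
    coeff a j (d + 1) = coeff a j d + coeff a (j + 1) (d + 1) := by
  simp only [coeff, ← Ico_add_one_right_eq_Icc]
  rw [sum_eq_sum_Ico_succ_bot (by omega : j < d + 1 + 1),
    sum_eq_sum_Ico_succ_bot (by omega : j < d + 1),
    sum_Ico_succ_top (by omega : j + 1 ≤ d + 1), sum_Ico_succ_top (by omega : j + 1 ≤ d + 1)]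
  have pascal : ∀ k ∈ Ico (j + 1) (d + 1),
      ((d + 1 - j).choose (d + 1 - k) : ℚ) * a k / 2 ^ k =
        ((d - j).choose (d - k) : ℚ) * a k / 2 ^ k +
          ((d - j).choose (d + 1 - k) : ℚ) * a k / 2 ^ k := by
    intro k hk
    rw [mem_Ico] at hk
    rw [show d + 1 - j = d - j + 1 by omega, show d + 1 - k = d - k + 1 by omega,
      Nat.choose_succ_succ]
    push_cast
    ring
  rw [sum_congr rfl pascal, sum_add_distrib, show d + 1 - j = d - j + 1 by omega]
  simp only [Nat.choose_self, Nat.cast_one, one_mul, tsub_self, Nat.choose_zero_right,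
    Nat.reduceSubDiff]
  ring

theorem coeff_succ_right_eq_sum_add {j i d : ℕ} (hji : j ≤ i) (hi : i ≤ d + 1) :
    coeff a j (d + 1) = ∑ l ∈ Ico j i, coeff a l d + coeff a i (d + 1) := by
  induction i, hji using Nat.le_induction with
  | base => simp
  | succ i hji ih =>
    rw [ih (by omega), coeff_succ_right (by omega : i ≤ d), sum_Ico_succ_top hji]
    ring

theorem sum_range_choose_mul_pow (m : ℕ) :
    ∑ k ∈ range m, a k * (m.choose k : ℚ) * 2 ^ (m - k) = 2 ^ m * coeff a 0 m - a m := by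
  have full : ∑ k ∈ range (m + 1), a k * (m.choose k : ℚ) * 2 ^ (m - k) = 2 ^ m * coeff a 0 m := by
    rw [coeff, ← Ico_add_one_right_eq_Icc, ← range_eq_Ico, mul_sum]
    refine sum_congr rfl fun k hk => ?_
    have hk : k ≤ m := mem_range_succ_iff.mp hk
    rw [Nat.sub_zero, Nat.choose_symm hk, show (2 : ℚ) ^ m = 2 ^ (m - k) * 2 ^ k by
      rw [← pow_add, Nat.sub_add_cancel hk]]
    field_simp
  rw [sum_range_succ] at full
  simp only [Nat.choose_self, Nat.sub_self, pow_zero, Nat.cast_one, mul_one] at full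
  linarith

theorem Recurrence.succ_eq (hrec : Recurrence a) {n : ℕ} (hn : 2 ≤ n) :
    a (n + 1) = a n - 2 ^ n * coeff a 0 n - 2 ^ (n + 1) * coeff a 0 (n + 1) := by
  have h := hrec (n + 1) (by omega)
  simp only [Nat.add_sub_cancel, sum_range_choose_mul_pow] at h
  linarith

theorem pow_mul_coeff_zero {d : ℕ} (h : coeff a 0 d = (-1) ^ d * coeff a d d) :
    2 ^ d * coeff a 0 d = (-1) ^ d * a d := by
  rw [h, coeff_self]
  field_simp

theorem sum_coeff_eq_zero_of_odd {e : ℕ} (he : Odd e)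
    (hrow : ∀ j ≤ e, coeff a j e = (-1) ^ e * coeff a (e - j) e) :
    ∑ l ∈ range (e + 1), coeff a l e = 0 := by
  have hreflect := sum_range_reflect (fun l => coeff a l e) (e + 1)
  have hanti : ∑ l ∈ range (e + 1), coeff a l e = -∑ l ∈ range (e + 1), coeff a (e - l) e := by
    rw [← sum_neg_distrib]
    refine sum_congr rfl fun l hl => ?_
    rw [hrow l (mem_range_succ_iff.mp hl), he.neg_one_pow, neg_one_mul]
  simp only [Nat.add_sub_cancel] at hreflect
  linarith

theorem coeff_symm_succ {e : ℕ} (hrow : ∀ j ≤ e, coeff a j e = (-1) ^ e * coeff a (e - j) e)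
    (hend : coeff a 0 (e + 1) = (-1) ^ (e + 1) * coeff a (e + 1) (e + 1)) {j : ℕ}
    (hj : j ≤ e + 1) : coeff a j (e + 1) = (-1) ^ (e + 1) * coeff a (e + 1 - j) (e + 1) := by
  induction j with
  | zero => exact hend
  | succ j ih =>
    have hj : j ≤ e := by omega
    have step := coeff_succ_right (a := a) hj
    have mirror := coeff_succ_right (a := a) (Nat.sub_le e j)
    rw [show e + 1 - j = e - j + 1 by omega] at ih
    rw [show e + 1 - (j + 1) = e - j by omega]
    linear_combination -step + ih (by omega) - hrow j hj - (-1) ^ (e + 1) * mirror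

theorem coeff_symm (h0 : a 0 = 1) (h1 : a 1 = -1) (hrec : Recurrence a) {j d : ℕ} (hj : j ≤ d) :
    coeff a j d = (-1) ^ d * coeff a (d - j) d := by
  induction d generalizing j with
  | zero => simp [Nat.le_zero.mp hj]
  | succ e ih =>
    refine coeff_symm_succ (fun j hj => ih hj) ?_ hj
    rcases Nat.even_or_odd e with he | he
    · rcases (by obtain ⟨t, ht⟩ := he; omega : e = 0 ∨ 2 ≤ e) with rfl | he2
      · norm_num [coeff, sum_Icc_succ_top, h0, h1]
      · have hlow := pow_mul_coeff_zero (ih (Nat.zero_le e))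
        have hrec := hrec.succ_eq he2
        rw [he.neg_one_pow, one_mul] at hlow
        rw [he.add_one.neg_one_pow, coeff_self]
        field_simp
        linarith
    · rw [coeff_succ_right_eq_sum_add (Nat.zero_le _) le_rfl, ← range_eq_Ico,
        sum_coeff_eq_zero_of_odd he fun j hj => ih hj, he.add_one.neg_one_pow]
      ring

theorem apply_even_eq (h0 : a 0 = 1) (h1 : a 1 = -1) (hrec : Recurrence a) {h : ℕ}
    (hh : 1 ≤ h) : a (2 * h + 2) = a (2 * h + 1) := by
  have hodd := pow_mul_coeff_zero (coeff_symm h0 h1 hrec (Nat.zero_le (2 * h + 1)))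
  have heven := pow_mul_coeff_zero (coeff_symm h0 h1 hrec (Nat.zero_le (2 * h + 2)))
  have hrec := hrec.succ_eq (n := 2 * h + 1) (by omega)
  rw [Odd.neg_one_pow ⟨h, rfl⟩] at hodd
  rw [Even.neg_one_pow ⟨h + 1, by ring⟩] at heven
  linarith

theorem coeff_two_nonpos (h0 : a 0 = 1) (h1 : a 1 = -1) (h2 : a 2 ≤ 0) {j : ℕ} (hj : j ≤ 2) :
    coeff a j 2 ≤ 0 := by
  interval_cases j <;> norm_num [coeff, sum_Icc_succ_top, h0, h1] <;> linarith

variable {s : ℚ}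

theorem mul_coeff_odd_row_nonpos (h0 : a 0 = 1) (h1 : a 1 = -1) (hrec : Recurrence a) {h : ℕ}
    (hrow : ∀ j ≤ 2 * h, 0 ≤ s * coeff a j (2 * h)) {i : ℕ} (hi : h + 1 ≤ i) (hi' : i ≤ 2 * h + 1) :
    s * coeff a i (2 * h + 1) ≤ 0 := by
  have hsum := coeff_succ_right_eq_sum_add (a := a) (j := 2 * h + 1 - i) (by omega) hi'
  have hanti := coeff_symm h0 h1 hrec (j := 2 * h + 1 - i) (d := 2 * h + 1) (by omega)
  rw [Odd.neg_one_pow ⟨h, rfl⟩, show 2 * h + 1 - (2 * h + 1 - i) = i by omega] at hanti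
  have hpos : 0 ≤ s * ∑ l ∈ Ico (2 * h + 1 - i) i, coeff a l (2 * h) := by
    rw [mul_sum]
    exact sum_nonneg fun l hl => hrow l (by rw [mem_Ico] at hl; omega)
  have hhalf : s * coeff a i (2 * h + 1) = -(s * ∑ l ∈ Ico (2 * h + 1 - i) i, coeff a l (2 * h)) / 2 := by
    linear_combination (-s / 2) * (hsum - hanti)
  linarith

theorem mul_coeff_even_row_succ_nonpos (h0 : a 0 = 1) (h1 : a 1 = -1) (hrec : Recurrence a)
    {h : ℕ} (hh : 1 ≤ h) (hrow : ∀ j ≤ 2 * h, 0 ≤ s * coeff a j (2 * h)) {j : ℕ}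
    (hj : j ≤ 2 * h + 2) : s * coeff a j (2 * h + 2) ≤ 0 := by
  have hodd : ∀ i, h + 1 ≤ i → i ≤ 2 * h + 1 → s * coeff a i (2 * h + 1) ≤ 0 :=
    fun _ => mul_coeff_odd_row_nonpos h0 h1 hrec hrow
  have hlast : s * coeff a (2 * h + 2) (2 * h + 2) ≤ 0 := by
    have hhalf : coeff a (2 * h + 2) (2 * h + 2) = coeff a (2 * h + 1) (2 * h + 1) / 2 := by
      rw [coeff_self, coeff_self, apply_even_eq h0 h1 hrec hh, pow_succ]
      field_simp
    rw [hhalf, mul_div_assoc']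
    exact div_nonpos_of_nonpos_of_nonneg (hodd _ (by omega) le_rfl) zero_le_two
  have hright : ∀ i, h + 1 ≤ i → i ≤ 2 * h + 2 → s * coeff a i (2 * h + 2) ≤ 0 := by
    intro i hi hi'
    rw [coeff_succ_right_eq_sum_add hi' le_rfl, mul_add, mul_sum]
    exact add_nonpos (sum_nonpos fun l hl => hodd l (by rw [mem_Ico] at hl; omega)
      (by rw [mem_Ico] at hl; omega)) hlast
  rcases le_or_gt (h + 1) j with hj' | hj'
  · exact hright j hj' hj
  · rw [coeff_symm h0 h1 hrec hj, Even.neg_one_pow ⟨h + 1, by ring⟩, one_mul]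
    exact hright _ (by omega) (by omega)

theorem neg_one_pow_mul_coeff_nonneg (h0 : a 0 = 1) (h1 : a 1 = -1) (h2 : a 2 ≤ 0)
    (hrec : Recurrence a) {h : ℕ} (hh : 1 ≤ h) {j : ℕ} (hj : j ≤ 2 * h) :
    0 ≤ (-1) ^ h * coeff a j (2 * h) := by
  induction h, hh using Nat.le_induction generalizing j with
  | base => simpa using coeff_two_nonpos h0 h1 h2 hj
  | succ h hh ih =>
    have := mul_coeff_even_row_succ_nonpos h0 h1 hrec hh (fun j hj => ih hj) (j := j) (by omega)
    rw [pow_succ, show 2 * (h + 1) = 2 * h + 2 by ring]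
    linarith

end CubicalGromov

open CubicalGromov in
theorem stmt_15 (A : ℚ) (hA : A ≤ -1) (a : ℕ → ℚ)
    (h0 : a 0 = 1) (h1 : a 1 = -1) (h2 : a 2 = A)
    (hrec : ∀ n, 3 ≤ n →
      2 * a n = -((∑ k ∈ Finset.range (n - 1), a k * ((n - 1).choose k : ℚ) * 2 ^ (n - 1 - k)) +
        ∑ k ∈ Finset.range n, a k * (n.choose k : ℚ) * 2 ^ (n - k)))
    (c : ℕ → ℕ → ℚ)
    (hc : ∀ j d, c j d = ∑ k ∈ Finset.Icc j d,
      ((d - j).choose (d - k) : ℚ) * a k / 2 ^ k) :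
    ∀ m, 1 ≤ m →
      (∀ j, j ≤ 4 * m → 0 ≤ c j (4 * m)) ∧
      (∀ j, j ≤ 4 * m + 2 → c j (4 * m + 2) ≤ 0) := by
  obtain rfl : c = coeff a := funext₂ hc
  have ha2 : a 2 ≤ 0 := by linarith
  intro m hm
  refine ⟨fun j hj => ?_, fun j hj => ?_⟩
  · simpa [pow_mul, show 2 * (2 * m) = 4 * m by ring] using
      neg_one_pow_mul_coeff_nonneg h0 h1 ha2 hrec (h := 2 * m) (by omega) (j := j) (by omega)
  · simpa [pow_succ, pow_mul, show 2 * (2 * m + 1) = 4 * m + 2 by ring] using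
      neg_one_pow_mul_coeff_nonneg h0 h1 ha2 hrec (h := 2 * m + 1) (by omega) (j := j) (by omega)
end
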